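/- Let f : ℝ^n → ℝ ∪ {∞} be proper closed and strongly convex with modulus μ_f > 0, g : ℝ^m → ℝ ∪ {∞} proper closed convex, A : ℝ^n → ℝ^m linear, and assume A(dom f) ∩ dom g ≠ ∅. Define the dual function ψ(y) = f*(-Aᵀy) + g*(y), x(y) = argmin_x { f(x) + ⟨y, Ax⟩ }, z_γ(y) = prox_{γ^{-1}g}(γ^{-1}y + Ax(y)), and the AME ψ_γ(y) = -[ f(x(y)) + g(z_γ(y)) + ⟨y, Ax(y) - z_γ(y)⟩ + (γ/2)‖Ax(y) - z_γ(y)‖² ]. Then ψ_γ(y) = f*(-Aᵀy) + g*(T_γ(y)) + (γ/2)‖Ax(y) - z_γ(y)‖² + γ⟨Ax(y), z_γ(y) - Ax(y)⟩, where T_γ(y) = y + γ(Ax(y) - z_γ(y)). -/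

import Mathlib

open scoped InnerProductSpace RealInnerProductSpace
open Filter Topology

noncomputable section

abbrev E (n : ℕ) := EuclideanSpace ℝ (Fin n)

/-- Convexity for extended-real-valued functions. -/
def EConvexOn {n : ℕ} (f : E n → EReal) : Prop :=
  ∀ x y : E n, ∀ a b : ℝ, 0 ≤ a → 0 ≤ b → a + b = 1 →
    f (a • x + b • y) ≤ (a : EReal) * f x + (b : EReal) * f y

def ProperFun {n : ℕ} (f : E n → EReal) : Prop :=
  (∃ x, f x ≠ ⊤) ∧ ∀ x, f x ≠ ⊥

def ProperClosedConvex {n : ℕ} (f : E n → EReal) : Prop :=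
  ProperFun f ∧ LowerSemicontinuous f ∧ EConvexOn f

/-- `f` is strongly convex with modulus `μ`: `f - (μ/2)‖·‖²` is convex. -/
def StronglyConvexWithMod {n : ℕ} (μ : ℝ) (f : E n → EReal) : Prop :=
  EConvexOn (fun x => f x - ((μ / 2 * ‖x‖ ^ 2 : ℝ) : EReal))

/-- Fenchel conjugate. -/
def conjFn {n : ℕ} (f : E n → EReal) (y : E n) : EReal :=
  ⨆ x : E n, ((⟪x, y⟫_ℝ : ℝ) : EReal) - f x

/-- Convex subdifferential. -/
def Subdiff {n : ℕ} (f : E n → EReal) (x : E n) : Set (E n) :=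
  {v | ∀ z, f x + ((⟪v, z - x⟫_ℝ : ℝ) : EReal) ≤ f z}

/-- `p` is the proximal point of `x` for `h` with stepsize `γ`. -/
def IsProx {n : ℕ} (γ : ℝ) (h : E n → EReal) (x p : E n) : Prop :=
  ∀ z : E n, h p + ((1 / (2 * γ) * ‖p - x‖ ^ 2 : ℝ) : EReal) ≤
    h z + ((1 / (2 * γ) * ‖z - x‖ ^ 2 : ℝ) : EReal)

/-- Moreau envelope. -/
def moreauEnv {n : ℕ} (γ : ℝ) (h : E n → EReal) (x : E n) : EReal :=
  ⨅ z : E n, h z + ((1 / (2 * γ) * ‖z - x‖ ^ 2 : ℝ) : EReal)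

/-- Dual objective `ψ(y) = f*(-Aᵀy) + g*(y)`. -/
def dualObj {n m : ℕ} (f : E n → EReal) (g : E m → EReal) (A : E n →L[ℝ] E m)
    (y : E m) : EReal :=
  conjFn f (-(ContinuousLinearMap.adjoint A y)) + conjFn g y

/-- The alternating minimization envelope `ψ_γ(y) = -L_γ(x(y), z_γ(y), y)`. -/
def AME {n m : ℕ} (f : E n → EReal) (g : E m → EReal) (A : E n →L[ℝ] E m)
    (γ : ℝ) (xmin : E m → E n) (zmin : E m → E m) (y : E m) : EReal :=
  -(f (xmin y) + g (zmin y)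
    + ((⟪y, A (xmin y) - zmin y⟫_ℝ + γ / 2 * ‖A (xmin y) - zmin y‖ ^ 2 : ℝ) : EReal))

/-! `-Aᵀy ∈ ∂f(x(y))` is the minimality of `x(y)`. Comparing `z_γ(y)` with the points of the
segment towards any `v`, using convexity of `g` and letting the point tend to `z_γ(y)`, gives the
prox optimality condition `T_γ(y) ∈ ∂g(z_γ(y))`. At a subgradient the Fenchel–Young inequality is
an equality, so both conjugates are explicit and the identity becomes one between inner products. -/

lemma EReal.ne_top_of_add_coe_le_add_coe {a b : EReal} {c d : ℝ} (h : a + c ≤ b + d) (hb : b ≠ ⊤) :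
    a ≠ ⊤ := by
  rintro rfl
  induction b using EReal.rec <;> simp_all [← EReal.coe_add]

lemma le_of_forall_mem_Ioc_le_add_mul {a b q : ℝ}
    (h : ∀ s ∈ Set.Ioc (0 : ℝ) 1, a ≤ b + s * q) : a ≤ b := by
  have hlim : Tendsto (fun s => b + s * q) (𝓝[>] 0) (𝓝 b) :=
    ((by fun_prop : Continuous fun s : ℝ => b + s * q).tendsto' 0 b (by simp)).mono_left
      nhdsWithin_le_nhds
  exact ge_of_tendsto hlim (Filter.mem_of_superset (Ioc_mem_nhdsGT one_pos) h)

section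

variable {n : ℕ}

lemma conjFn_eq_of_mem_subdiff {f : E n → EReal} {x v : E n} (hv : v ∈ Subdiff f x) :
    conjFn f v = ((⟪x, v⟫_ℝ : ℝ) : EReal) - f x := by
  refine le_antisymm (iSup_le fun u => ?_) (le_iSup (fun u => ((⟪u, v⟫_ℝ : ℝ) : EReal) - f u) x)
  have hu := hv u
  rw [inner_sub_right, real_inner_comm u v, real_inner_comm x v] at hu
  generalize f x = a at hu ⊢
  generalize f u = b at hu ⊢
  induction a using EReal.rec <;> induction b using EReal.rec <;>
    simp_all [← EReal.coe_add, ← EReal.coe_sub]; linarith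

lemma neg_mem_subdiff_of_forall_add_inner_le {f : E n → EReal} {x w : E n}
    (h : ∀ u, f x + ((⟪w, x⟫_ℝ : ℝ) : EReal) ≤ f u + ((⟪w, u⟫_ℝ : ℝ) : EReal)) :
    -w ∈ Subdiff f x := by
  intro u
  have hu := h u
  rw [inner_neg_left, inner_sub_right]
  generalize f x = a at hu ⊢
  generalize f u = b at hu ⊢
  induction a using EReal.rec <;> induction b using EReal.rec <;>
    simp_all [← EReal.coe_add, -EReal.coe_sub]; linarith

lemma IsProx.inv_smul_sub_mem_subdiff {h : E n → EReal} {t : ℝ} {w p : E n}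
    (hprox : IsProx t h w p) (hconv : EConvexOn h) (hbot : ∀ x, h x ≠ ⊥) :
    t⁻¹ • (w - p) ∈ Subdiff h p := by
  intro v
  rcases eq_or_ne (h v) ⊤ with hv | hv
  · simp [hv]
  have hp : h p ≠ ⊤ := EReal.ne_top_of_add_coe_le_add_coe (hprox v) hv
  obtain ⟨a, ha⟩ : ∃ a : ℝ, h p = a := ⟨_, (EReal.coe_toReal hp (hbot p)).symm⟩
  obtain ⟨b, hb⟩ : ∃ b : ℝ, h v = b := ⟨_, (EReal.coe_toReal hv (hbot v)).symm⟩
  rw [ha, hb, ← EReal.coe_add, EReal.coe_le_coe_iff]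
  refine le_of_forall_mem_Ioc_le_add_mul (q := ‖v - p‖ ^ 2 / (2 * t)) fun s ⟨hs, hs1⟩ => ?_
  have hseg := hconv v p s (1 - s) hs.le (by linarith) (by ring)
  have hmin := (hprox (s • v + (1 - s) • p)).trans (add_le_add_left hseg _)
  rw [ha, hb] at hmin
  norm_cast at hmin
  have hnorm : ‖s • v + (1 - s) • p - w‖ ^ 2 =
      ‖p - w‖ ^ 2 + 2 * (s * ⟪p - w, v - p⟫_ℝ) + s ^ 2 * ‖v - p‖ ^ 2 := by
    rw [show s • v + (1 - s) • p - w = (p - w) + s • (v - p) by module, norm_add_sq_real,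
      real_inner_smul_right, norm_smul, Real.norm_eq_abs, abs_of_pos hs, mul_pow]
  have hinner : ⟪t⁻¹ • (w - p), v - p⟫_ℝ = -(t⁻¹ * ⟪p - w, v - p⟫_ℝ) := by
    rw [real_inner_smul_left, ← neg_sub p w, inner_neg_left, mul_neg]
  rw [hnorm] at hmin
  rw [hinner]
  refine le_of_mul_le_mul_left ?_ hs
  linear_combination hmin
end

theorem AME_eq_forwardBackwardEnvelope_general
    {n m : ℕ} (γ : ℝ) (hγ : 0 < γ)
    (f : E n → EReal) (g : E m → EReal) (A : E n →L[ℝ] E m)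
    (hf : ProperClosedConvex f)
    (hg : ProperClosedConvex g)
    (hfeas : ∃ x, f x ≠ ⊤ ∧ g (A x) ≠ ⊤)
    (xmin : E m → E n)
    (hx : ∀ y x, f (xmin y) + ((⟪y, A (xmin y)⟫_ℝ : ℝ) : EReal)
        ≤ f x + ((⟪y, A x⟫_ℝ : ℝ) : EReal))
    (zmin : E m → E m)
    (hz : ∀ y, IsProx γ⁻¹ g (γ⁻¹ • y + A (xmin y)) (zmin y)) :
    ∀ y : E m,
      AME f g A γ xmin zmin y =
        conjFn f (-(ContinuousLinearMap.adjoint A y))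
        + conjFn g (y + γ • (A (xmin y) - zmin y))
        + ((γ / 2 * ‖A (xmin y) - zmin y‖ ^ 2
            + γ * ⟪A (xmin y), zmin y - A (xmin y)⟫_ℝ : ℝ) : EReal) := by
  intro y
  rw [AME]
  obtain ⟨x₀, hfx₀, hgx₀⟩ := hfeas
  set x := xmin y
  set z := zmin y
  have hfx : f x ≠ ⊤ := EReal.ne_top_of_add_coe_le_add_coe (hx y x₀) hfx₀
  have hgz : g z ≠ ⊤ := EReal.ne_top_of_add_coe_le_add_coe (hz y (A x₀)) hgx₀
  have hsubf : -(ContinuousLinearMap.adjoint A y) ∈ Subdiff f x :=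
    neg_mem_subdiff_of_forall_add_inner_le fun u => by
      simpa only [ContinuousLinearMap.adjoint_inner_left] using hx y u
  have hsubg : y + γ • (A x - z) ∈ Subdiff g z := by
    convert (hz y).inv_smul_sub_mem_subdiff hg.2.2 hg.1.2 using 1
    rw [inv_inv, add_sub_assoc, smul_add, smul_inv_smul₀ hγ.ne']
  rw [conjFn_eq_of_mem_subdiff hsubf, conjFn_eq_of_mem_subdiff hsubg,
    ← EReal.coe_toReal hfx (hf.1.2 x), ← EReal.coe_toReal hgz (hg.1.2 z)]
  norm_cast
  rw [inner_neg_right, ContinuousLinearMap.adjoint_inner_right, ← real_inner_self_eq_norm_sq]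
  simp only [inner_add_right, inner_sub_left, inner_sub_right, real_inner_smul_right,
    real_inner_comm (A x) z, real_inner_comm y z, real_inner_comm y (A x)]
  ring

/-- The alternating minimization envelope equals the forward-backward envelope
of the dual problem. -/
theorem AME_eq_forwardBackwardEnvelope
    {n m : ℕ} (μ γ : ℝ) (hμ : 0 < μ) (hγ : 0 < γ)
    (f : E n → EReal) (g : E m → EReal) (A : E n →L[ℝ] E m)
    (hf : ProperClosedConvex f) (hsc : StronglyConvexWithMod μ f)
    (hg : ProperClosedConvex g)
    (hfeas : ∃ x, f x ≠ ⊤ ∧ g (A x) ≠ ⊤)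
    (xmin : E m → E n)
    (hx : ∀ y x, f (xmin y) + ((⟪y, A (xmin y)⟫_ℝ : ℝ) : EReal)
        ≤ f x + ((⟪y, A x⟫_ℝ : ℝ) : EReal))
    (zmin : E m → E m)
    (hz : ∀ y, IsProx γ⁻¹ g (γ⁻¹ • y + A (xmin y)) (zmin y)) :
    ∀ y : E m,
      AME f g A γ xmin zmin y =
        conjFn f (-(ContinuousLinearMap.adjoint A y))
        + conjFn g (y + γ • (A (xmin y) - zmin y))
        + ((γ / 2 * ‖A (xmin y) - zmin y‖ ^ 2
            + γ * ⟪A (xmin y), zmin y - A (xmin y)⟫_ℝ : ℝ) : EReal) :=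
  AME_eq_forwardBackwardEnvelope_general γ hγ f g A hf hg hfeas xmin hx zmin hz
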